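/- Let c denote the space of convergent real sequences (indexed by the positive integers), and let a¹ = (1)_{i}, a² = (1/i²)_{i}, b = (2/i)_{i}, all of which lie in c. The supremum of ψ(b) over all positive linear functionals ψ on c satisfying ψ(a¹) = 1 and ψ(a²) = 0 equals 0, which is the optimal value of the primal semi-infinite linear program infimize x₁ subject to x₁ + (1/i²)x₂ ≥ 2/i for all positive integers i. In particular, the limit functional ψ(v) = lim_{i→∞} v(i) is a feasible dual solution attaining the value 0, so the algebraic Lagrangian dual over the constraint space c has zero duality gap with the primal, even though the finite support dual has an infinite duality gap. -/

import Mathlib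

open Filter

/-- The subspace `c` of convergent real sequences (indexed by the positive integers). -/
def convSeqs : Submodule ℝ (ℕ+ → ℝ) where
  carrier := {v | ∃ L : ℝ, Tendsto v atTop (nhds L)}
  add_mem' := by rintro v w ⟨L, hL⟩ ⟨K, hK⟩; exact ⟨L + K, hL.add hK⟩
  zero_mem' := ⟨0, tendsto_const_nhds⟩
  smul_mem' := by rintro t v ⟨L, hL⟩; exact ⟨t • L, hL.const_smul t⟩

/-- The constraint column `a¹ = (1)ᵢ`. -/
def aOne : ℕ+ → ℝ := fun _ => 1

/-- The constraint column `a² = (1/i²)ᵢ`. -/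
noncomputable def aTwo : ℕ+ → ℝ := fun i => 1 / ((i : ℕ) : ℝ) ^ 2

/-- The right-hand side `b = (2/i)ᵢ`. -/
noncomputable def bSeq : ℕ+ → ℝ := fun i => 2 / ((i : ℕ) : ℝ)

lemma pnat_coe_tendsto_atTop : Tendsto (fun i : ℕ+ => ((i : ℕ) : ℝ)) atTop atTop :=
  tendsto_natCast_atTop_atTop.comp
    (tendsto_atTop_atTop_of_monotone (fun _ _ h => (PNat.coe_le_coe _ _).mpr h)
      (fun n => ⟨⟨n + 1, Nat.succ_pos n⟩, Nat.le_succ n⟩))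

lemma aOne_mem : aOne ∈ convSeqs := ⟨1, tendsto_const_nhds⟩

lemma aTwo_mem : aTwo ∈ convSeqs := by
  refine ⟨0, ?_⟩
  show Tendsto (fun i : ℕ+ => 1 / ((i : ℕ) : ℝ) ^ 2) atTop (nhds 0)
  have h2 : Tendsto (fun i : ℕ+ => ((i : ℕ) : ℝ) ^ 2) atTop atTop := by
    exact (tendsto_pow_atTop two_ne_zero).comp pnat_coe_tendsto_atTop
  have h3 : Tendsto (fun i : ℕ+ => ((((i : ℕ) : ℝ)) ^ 2)⁻¹) atTop (nhds 0) :=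
    tendsto_inv_atTop_zero.comp h2
  simpa [one_div] using h3

lemma bSeq_mem : bSeq ∈ convSeqs := by
  refine ⟨0, ?_⟩
  show Tendsto (fun i : ℕ+ => 2 / ((i : ℕ) : ℝ)) atTop (nhds 0)
  have h : Tendsto (fun i : ℕ+ => 2 * (((i : ℕ) : ℝ))⁻¹) atTop (nhds (2 * 0)) :=
    (tendsto_inv_atTop_zero.comp pnat_coe_tendsto_atTop).const_mul (2 : ℝ)
  simpa [div_eq_mul_inv] using h

/-!
Weak duality: if `ψ` is positive with `ψ a¹ = 1`, `ψ a² = 0`, and `x` is primal feasible, then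
`b ≤ x₁ a¹ + x₂ a²` pointwise, so `ψ b ≤ x₁`. By AM-GM, `2/i ≤ ε + (4/ε)/i²`, so `(ε, 4/ε)` is
primal feasible for every `ε > 0` and the primal value is at most `0`. The limit functional is dual
feasible with value `lim b = 0`, so weak duality bounds the primal value below by `0` and the dual
value above by the primal value `0`. A finitely supported dual `u ≥ 0` with `∑ uᵢ / i² = 0`
vanishes because every `1/i²` is positive, so it cannot have `∑ uᵢ = 1`.
-/

open Filter Topology

section PositiveFunctional

variable {ι : Type*} {S : Submodule ℝ (ι → ℝ)}

def IsPositiveFunctional (ψ : S →ₗ[ℝ] ℝ) : Prop :=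
  ∀ v : S, (∀ i, 0 ≤ (v : ι → ℝ) i) → 0 ≤ ψ v

theorem IsPositiveFunctional.mono {ψ : S →ₗ[ℝ] ℝ} (hψ : IsPositiveFunctional ψ) {v w : S}
    (hvw : ∀ i, (v : ι → ℝ) i ≤ (w : ι → ℝ) i) : ψ v ≤ ψ w := by
  have h := hψ (w - v) fun i => sub_nonneg.mpr (hvw i)
  rwa [map_sub, sub_nonneg] at h

end PositiveFunctional

theorem finsum_mul_pos {ι : Type*} {a u : ι → ℝ} (ha : ∀ i, 0 < a i) (hu : ∀ i, 0 ≤ u i)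
    (hfin : (Function.support u).Finite) (hsum : ∑ᶠ i, u i ≠ 0) : 0 < ∑ᶠ i, a i * u i := by
  obtain ⟨i, hi⟩ : ∃ i, u i ≠ 0 := by
    by_contra! h
    exact hsum (finsum_eq_zero_of_forall_eq_zero h)
  exact finsum_pos (fun j => mul_nonneg (ha j).le (hu j))
    ⟨i, mul_pos (ha i) ((hu i).lt_of_ne' hi)⟩ (hfin.subset (Function.support_mul_subset_right _ _))

theorem two_mul_le_add_four_div_mul_sq {ε : ℝ} (hε : 0 < ε) (s : ℝ) :
    2 * s ≤ ε + 4 / ε * s ^ 2 := by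
  have h : ε + 4 / ε * s ^ 2 - 2 * s = ((ε - s) ^ 2 + 3 * s ^ 2) / ε := by
    field_simp
    ring
  have : 0 ≤ ((ε - s) ^ 2 + 3 * s ^ 2) / ε := by positivity
  linarith

namespace convSeqs

noncomputable def lim : convSeqs →ₗ[ℝ] ℝ where
  toFun v := limUnder atTop (v : ℕ+ → ℝ)
  map_add' v w := by
    obtain ⟨L, hL⟩ := v.2
    obtain ⟨K, hK⟩ := w.2
    exact ((hL.add hK).limUnder_eq).trans (by rw [hL.limUnder_eq, hK.limUnder_eq])
  map_smul' t v := by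
    obtain ⟨L, hL⟩ := v.2
    exact ((hL.const_smul t).limUnder_eq).trans (by rw [hL.limUnder_eq]; rfl)

theorem lim_eq_of_tendsto {v : ℕ+ → ℝ} {L : ℝ} (h : Tendsto v atTop (𝓝 L)) (hv : v ∈ convSeqs) :
    lim ⟨v, hv⟩ = L :=
  h.limUnder_eq

theorem isPositiveFunctional_lim : IsPositiveFunctional lim := fun v hv => by
  obtain ⟨L, hL⟩ := v.2
  rw [lim_eq_of_tendsto hL]
  exact ge_of_tendsto' hL hv

end convSeqs

theorem tendsto_aTwo : Tendsto aTwo atTop (𝓝 0) :=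
  tendsto_const_nhds.div_atTop ((tendsto_pow_atTop two_ne_zero).comp pnat_coe_tendsto_atTop)

theorem tendsto_bSeq : Tendsto bSeq atTop (𝓝 0) :=
  tendsto_const_nhds.div_atTop pnat_coe_tendsto_atTop

def IsPrimalFeasible (x : ℝ × ℝ) : Prop :=
  ∀ i : ℕ+, x.1 + aTwo i * x.2 ≥ bSeq i

def primalValues : Set ℝ :=
  {r | ∃ x : ℝ × ℝ, IsPrimalFeasible x ∧ x.1 = r}

def dualValues : Set ℝ :=
  {r | ∃ ψ : convSeqs →ₗ[ℝ] ℝ, IsPositiveFunctional ψ ∧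
    ψ ⟨aOne, aOne_mem⟩ = 1 ∧ ψ ⟨aTwo, aTwo_mem⟩ = 0 ∧ ψ ⟨bSeq, bSeq_mem⟩ = r}

theorem isPrimalFeasible_of_pos {ε : ℝ} (hε : 0 < ε) : IsPrimalFeasible (ε, 4 / ε) := fun i => by
  have h := two_mul_le_add_four_div_mul_sq hε (1 / ((i : ℕ) : ℝ))
  simp only [aTwo, bSeq, ge_iff_le]
  rw [mul_one_div, one_div_pow] at h
  linarith

theorem weak_duality {ψ : convSeqs →ₗ[ℝ] ℝ} (hψ : IsPositiveFunctional ψ)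
    (h₁ : ψ ⟨aOne, aOne_mem⟩ = 1) (h₂ : ψ ⟨aTwo, aTwo_mem⟩ = 0) {x : ℝ × ℝ}
    (hx : IsPrimalFeasible x) : ψ ⟨bSeq, bSeq_mem⟩ ≤ x.1 := by
  have h := hψ.mono (v := ⟨bSeq, bSeq_mem⟩)
    (w := x.1 • ⟨aOne, aOne_mem⟩ + x.2 • ⟨aTwo, aTwo_mem⟩) fun i => by
      simpa [aOne, mul_comm] using hx i
  rw [map_add, map_smul, map_smul, h₁, h₂, smul_eq_mul, smul_eq_mul] at h
  linarith

theorem convSeqs.lim_aOne_aTwo_bSeq :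
    convSeqs.lim ⟨aOne, aOne_mem⟩ = 1 ∧ convSeqs.lim ⟨aTwo, aTwo_mem⟩ = 0 ∧
      convSeqs.lim ⟨bSeq, bSeq_mem⟩ = 0 :=
  ⟨convSeqs.lim_eq_of_tendsto tendsto_const_nhds _, convSeqs.lim_eq_of_tendsto tendsto_aTwo _,
    convSeqs.lim_eq_of_tendsto tendsto_bSeq _⟩

theorem sInf_primalValues : sInf primalValues = 0 := by
  refine csInf_eq_of_forall_ge_of_forall_gt_exists_lt ⟨1, _, isPrimalFeasible_of_pos one_pos, rfl⟩
    ?_ fun ε hε => ⟨ε / 2, ⟨_, isPrimalFeasible_of_pos (half_pos hε), rfl⟩, half_lt_self hε⟩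
  rintro _ ⟨x, hx, rfl⟩
  obtain ⟨h₁, h₂, hb⟩ := convSeqs.lim_aOne_aTwo_bSeq
  simpa [hb] using weak_duality convSeqs.isPositiveFunctional_lim h₁ h₂ hx

theorem sSup_dualValues : sSup dualValues = 0 := by
  refine IsGreatest.csSup_eq
    ⟨⟨convSeqs.lim, convSeqs.isPositiveFunctional_lim, convSeqs.lim_aOne_aTwo_bSeq⟩, ?_⟩
  rintro _ ⟨ψ, hψ, h₁, h₂, rfl⟩
  rw [← sInf_primalValues]
  exact le_csInf ⟨1, _, isPrimalFeasible_of_pos one_pos, rfl⟩ fun _ ⟨x, hx, hr⟩ =>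
    hr ▸ weak_duality hψ h₁ h₂ hx

/-- For the SILP `inf x₁ s.t. x₁ + (1/i²)x₂ ≥ 2/i` (`i` a positive
integer), with data `a¹ = (1)ᵢ, a² = (1/i²)ᵢ, b = (2/i)ᵢ ∈ c`: the supremum of `ψ(b)`
over positive linear functionals `ψ` on `c` with `ψ(a¹) = 1` and `ψ(a²) = 0` equals `0`,
which is the optimal value of the primal. In particular the limit functional is a
feasible dual solution attaining the value `0` (zero duality gap over the constraint
space `c`), even though the finite support dual is infeasible (infinite duality gap). -/
theorem algebraic_dual_over_c_closes_gap :
    sSup {r : ℝ | ∃ ψ : convSeqs →ₗ[ℝ] ℝ,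
        (∀ v : convSeqs, (∀ i, 0 ≤ (v : ℕ+ → ℝ) i) → 0 ≤ ψ v) ∧
        ψ ⟨aOne, aOne_mem⟩ = 1 ∧ ψ ⟨aTwo, aTwo_mem⟩ = 0 ∧ ψ ⟨bSeq, bSeq_mem⟩ = r} = 0 ∧
    sInf {r : ℝ | ∃ x : ℝ × ℝ,
        (∀ i : ℕ+, x.1 + (1 / ((i : ℕ) : ℝ) ^ 2) * x.2 ≥ 2 / ((i : ℕ) : ℝ)) ∧
        x.1 = r} = 0 ∧
    (∃ ψ : convSeqs →ₗ[ℝ] ℝ,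
        (∀ v : convSeqs, (∀ i, 0 ≤ (v : ℕ+ → ℝ) i) → 0 ≤ ψ v) ∧
        (∀ (v : ℕ+ → ℝ) (L : ℝ), Tendsto v atTop (nhds L) →
          ∀ hv : v ∈ convSeqs, ψ ⟨v, hv⟩ = L) ∧
        ψ ⟨aOne, aOne_mem⟩ = 1 ∧ ψ ⟨aTwo, aTwo_mem⟩ = 0 ∧ ψ ⟨bSeq, bSeq_mem⟩ = 0) ∧
    ¬ ∃ u : ℕ+ → ℝ, {i | u i ≠ 0}.Finite ∧ (∀ i, 0 ≤ u i) ∧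
        (∑ᶠ i : ℕ+, u i) = 1 ∧ (∑ᶠ i : ℕ+, (1 / ((i : ℕ) : ℝ) ^ 2) * u i) = 0 := by
  refine ⟨sSup_dualValues, sInf_primalValues,
    ⟨convSeqs.lim, convSeqs.isPositiveFunctional_lim, fun _ _ => convSeqs.lim_eq_of_tendsto,
      convSeqs.lim_aOne_aTwo_bSeq⟩, ?_⟩
  rintro ⟨u, hfin, hu, hsum, hsum₂⟩
  have hpos : 0 < ∑ᶠ i : ℕ+, (1 / ((i : ℕ) : ℝ) ^ 2) * u i :=
    finsum_mul_pos (fun i => by positivity) hu hfin (hsum ▸ one_ne_zero)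
  exact hpos.ne' hsum₂
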